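/- Let B be a Boltzmann machine with n visible nodes and m hidden nodes in which every node has at most k' connections. Then there exists a (k'+1)-local stoquastic frustration-free Hamiltonian H on n+m qubits, a sum of n+m terms (one per qubit), whose ground state |φ⟩ is unique and such that the distribution of B equals the marginal onto the first n bits of the distribution y ↦ |⟨y|φ⟩|², i.e. f(x)/∑_{x'} f(x') = ∑_{h∈{0,1}^m} |⟨(x,h)|φ⟩|² for all x ∈ {0,1}^n, where f is the output of B. -/

import Mathlib

open scoped BigOperators

namespace StoqPaper

/-- The real value (0 or 1) of a bit. -/
def bv (b : Bool) : ℝ := if b then 1 else 0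

/-- The ℓ² norm of a finitely-indexed family of complex numbers. -/
noncomputable def l2norm {α : Type*} [Fintype α] (v : α → ℂ) : ℝ :=
  Real.sqrt (∑ x, Complex.normSq (v x))

/-- The inner product ⟨v|w⟩ (antilinear in the first slot). -/
noncomputable def qInner {α : Type*} [Fintype α] (v w : α → ℂ) : ℂ :=
  ∑ x, (starRingEnd ℂ) (v x) * w x

/-- `‖M‖_op ≤ J` for the ℓ²-operator norm, stated via its universal property. -/
def OpNormLE {α : Type*} [Fintype α] (M : Matrix α α ℂ) (J : ℝ) : Prop :=
  ∀ v : α → ℂ, l2norm (M.mulVec v) ≤ J * l2norm v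

/-- The uniform superposition state |+⟩ on qubits indexed by `ι`. -/
noncomputable def plusState (ι : Type*) [Fintype ι] : (ι → Bool) → ℂ :=
  fun _ => ((Real.sqrt (2 ^ Fintype.card ι) : ℝ)⁻¹ : ℝ)

variable {ι : Type*} [Fintype ι] [DecidableEq ι]

/-- A matrix on qubits indexed by `ι` acts nontrivially only on the qubit set `S`:
entries vanish unless the two configurations agree outside `S`, and entries depend
only on the restrictions of the two configurations to `S`. -/
def LocalOn (S : Finset ι) (M : Matrix (ι → Bool) (ι → Bool) ℂ) : Prop :=
  (∀ x y : ι → Bool, (∃ i, i ∉ S ∧ x i ≠ y i) → M x y = 0) ∧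
  (∀ x y x' y' : ι → Bool, (∀ i ∈ S, x i = x' i) → (∀ i ∈ S, y i = y' i) →
    (∀ i, i ∉ S → x i = y i) → (∀ i, i ∉ S → x' i = y' i) → M x y = M x' y')

/-- A matrix is `k`-local if it acts nontrivially on at most `k` qubits. -/
def KLocal (k : ℕ) (M : Matrix (ι → Bool) (ι → Bool) ℂ) : Prop :=
  ∃ S : Finset ι, S.card ≤ k ∧ LocalOn S M

/-- A `k`-local matrix all of whose local-matrix entries are real and strictly positive. -/
def KLocalPositive (k : ℕ) (M : Matrix (ι → Bool) (ι → Bool) ℂ) : Prop :=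
  ∃ S : Finset ι, S.card ≤ k ∧ LocalOn S M ∧
    ∀ x y : ι → Bool, (∀ i, i ∉ S → x i = y i) → (M x y).im = 0 ∧ 0 < (M x y).re

/-- Stoquastic entries: all entries real, and off-diagonal entries nonpositive. -/
def StoqEntries (M : Matrix (ι → Bool) (ι → Bool) ℂ) : Prop :=
  ∀ x y : ι → Bool, (M x y).im = 0 ∧ (x ≠ y → (M x y).re ≤ 0)

/-- `μ` is a (real) eigenvalue of `M`. -/
def IsEig {α : Type*} [Fintype α] (M : Matrix α α ℂ) (μ : ℝ) : Prop :=
  ∃ v : α → ℂ, v ≠ 0 ∧ M.mulVec v = (μ : ℂ) • v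

/-- `E` is the smallest (real) eigenvalue of `M` (the ground energy). -/
def IsGroundEnergy {α : Type*} [Fintype α] (M : Matrix α α ℂ) (E : ℝ) : Prop :=
  IsEig M E ∧ ∀ μ : ℝ, IsEig M μ → E ≤ μ

/-- Every eigenvalue of `M` is either the ground energy `E` or at least `E + Δ`:
the energy gap of `M` is at least `Δ`. -/
def GapAtLeast {α : Type*} [Fintype α] (M : Matrix α α ℂ) (E Δ : ℝ) : Prop :=
  ∀ μ : ℝ, IsEig M μ → μ = E ∨ E + Δ ≤ μ

/-- `P` is the orthogonal projector onto the `E`-eigenspace of `M`: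
it is Hermitian, idempotent, and its fixed space is exactly that eigenspace. -/
def IsGroundProjector {α : Type*} [Fintype α] (M P : Matrix α α ℂ) (E : ℝ) : Prop :=
  P.IsHermitian ∧ P * P = P ∧
    ∀ v : α → ℂ, M.mulVec v = (E : ℂ) • v ↔ P.mulVec v = v

/-- A function of bit configurations depends only on the bits in `S`. -/
def DependsOnlyOn (S : Finset ι) (f : (ι → Bool) → ℝ) : Prop :=
  ∀ y y' : ι → Bool, (∀ i ∈ S, y i = y' i) → f y = f y'

/-- The Gibbs distribution (at temperature 1) of a classical Hamiltonian. -/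
noncomputable def gibbs (Hc : (ι → Bool) → ℝ) (y : ι → Bool) : ℝ :=
  Real.exp (-(Hc y)) / ∑ z, Real.exp (-(Hc z))

/-- Total variation distance between two real functions on a finite set. -/
noncomputable def tvDist {α : Type*} [Fintype α] (p q : α → ℝ) : ℝ :=
  (1 / 2) * ∑ x, |p x - q x|

/-- A Hyper Boltzmann Machine with `n` visible nodes, `m` hidden nodes
and `T` hyperedges. -/
structure HBM (n m T : ℕ) where
  /-- the set of nodes of each hyperedge -/
  edge : Fin T → Finset (Fin n ⊕ Fin m)
  /-- the local energy of each hyperedge -/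
  F : Fin T → ((Fin n ⊕ Fin m) → Bool) → ℝ
  /-- each local energy depends only on the bits at the nodes of its hyperedge -/
  F_local : ∀ t, DependsOnlyOn (edge t) (F t)

namespace HBM

variable {n m T : ℕ}

/-- An HBM is `k`-local if every hyperedge contains at most `k` nodes. -/
def IsKLocal (M : HBM n m T) (k : ℕ) : Prop := ∀ t, (M.edge t).card ≤ k

/-- The number of hyperedges containing a given node. -/
def deg (M : HBM n m T) (v : Fin n ⊕ Fin m) : ℕ :=
  (Finset.univ.filter (fun t => v ∈ M.edge t)).card

/-- The output of the HBM: hidden variables summed out of the Boltzmann weight. -/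
noncomputable def output (M : HBM n m T) (x : Fin n → Bool) : ℝ :=
  ∑ h : Fin m → Bool, Real.exp (-(∑ t, M.F t (Sum.elim x h)))

/-- The probability distribution of the HBM on visible configurations. -/
noncomputable def dist (M : HBM n m T) (x : Fin n → Bool) : ℝ :=
  M.output x / ∑ y, M.output y

/-- The HBM represents the state `ψ` to precision `ε` in distribution. -/
noncomputable def RepDist (M : HBM n m T) (ψ : (Fin n → Bool) → ℂ) (ε : ℝ) : Prop :=
  tvDist M.dist (fun x => Complex.normSq (ψ x)) ≤ ε

end HBM

/-- A Deep Boltzmann Machine with `n` visible nodes, `m₁` middle-layer hidden nodes and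
`m₂` deep-layer hidden nodes; edges run only between consecutive layers. -/
structure DBM (n m₁ m₂ : ℕ) where
  /-- biases of the visible nodes -/
  a : Fin n → ℝ
  /-- biases of the middle hidden nodes -/
  b : Fin m₁ → ℝ
  /-- biases of the deep hidden nodes -/
  c : Fin m₂ → ℝ
  /-- weights between visible and middle layers -/
  W : Fin n → Fin m₁ → ℝ
  /-- weights between middle and deep layers -/
  U : Fin m₁ → Fin m₂ → ℝ

namespace DBM

variable {n m₁ m₂ : ℕ}

/-- The energy of a configuration of a DBM. -/
noncomputable def energy (D : DBM n m₁ m₂) (x : Fin n → Bool) (h : Fin m₁ → Bool)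
    (g : Fin m₂ → Bool) : ℝ :=
  -(∑ i, D.a i * bv (x i)) - (∑ j, D.b j * bv (h j)) - (∑ l, D.c l * bv (g l))
    - (∑ i, ∑ j, D.W i j * bv (x i) * bv (h j))
    - (∑ j, ∑ l, D.U j l * bv (h j) * bv (g l))

/-- The output of a DBM. -/
noncomputable def output (D : DBM n m₁ m₂) (x : Fin n → Bool) : ℝ :=
  ∑ h : Fin m₁ → Bool, ∑ g : Fin m₂ → Bool, Real.exp (-(D.energy x h g))

/-- The probability distribution of a DBM on visible configurations. -/
noncomputable def dist (D : DBM n m₁ m₂) (x : Fin n → Bool) : ℝ :=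
  D.output x / ∑ y, D.output y

open Classical in
/-- The number of connections (degree) of a visible node. -/
noncomputable def degVis (D : DBM n m₁ m₂) (i : Fin n) : ℕ :=
  (Finset.univ.filter (fun j => D.W i j ≠ 0)).card

open Classical in
/-- The number of connections (degree) of a middle-layer hidden node. -/
noncomputable def degMid (D : DBM n m₁ m₂) (j : Fin m₁) : ℕ :=
  (Finset.univ.filter (fun i => D.W i j ≠ 0)).card
    + (Finset.univ.filter (fun l => D.U j l ≠ 0)).card

open Classical in
/-- The number of connections (degree) of a deep-layer hidden node. -/
noncomputable def degDeep (D : DBM n m₁ m₂) (l : Fin m₂) : ℕ :=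
  (Finset.univ.filter (fun j => D.U j l ≠ 0)).card

end DBM

/-- A (general) Boltzmann machine on `n` visible and `m` hidden nodes: a graph with
real biases on the nodes and real weights on the edges. -/
structure BM (n m : ℕ) where
  /-- biases -/
  a : (Fin n ⊕ Fin m) → ℝ
  /-- weights (zero weight = no edge) -/
  W : (Fin n ⊕ Fin m) → (Fin n ⊕ Fin m) → ℝ
  /-- weights are symmetric -/
  symm : ∀ u v, W u v = W v u
  /-- no self-loops -/
  diag : ∀ u, W u u = 0

namespace BM

variable {n m : ℕ}

/-- The energy of a configuration of a Boltzmann machine. -/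
noncomputable def energy (B : BM n m) (y : (Fin n ⊕ Fin m) → Bool) : ℝ :=
  -(∑ v, B.a v * bv (y v)) - (1 / 2) * ∑ u, ∑ v, B.W u v * bv (y u) * bv (y v)

/-- The output of a Boltzmann machine. -/
noncomputable def output (B : BM n m) (x : Fin n → Bool) : ℝ :=
  ∑ h : Fin m → Bool, Real.exp (-(B.energy (Sum.elim x h)))

/-- The probability distribution of a Boltzmann machine on visible configurations. -/
noncomputable def dist (B : BM n m) (x : Fin n → Bool) : ℝ :=
  B.output x / ∑ y, B.output y

open Classical in
/-- The number of connections (degree) of a node. -/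
noncomputable def deg (B : BM n m) (v : Fin n ⊕ Fin m) : ℕ :=
  (Finset.univ.filter (fun u => B.W v u ≠ 0)).card

end BM

end StoqPaper

namespace StoqPaper

/-- The bound `η^(−1/2) L^(5/2) J^(3/2) Δ^(−3/2) ε^(−1/2) (log(η⁻¹ε⁻¹))^(3/2)` appearing in the
theorems about general stoquastic Hamiltonians. -/
noncomputable def stoqBound (η L J Δ ε : ℝ) : ℝ :=
  η ^ (-(1 : ℝ) / 2) * L ^ ((5 : ℝ) / 2) * J ^ ((3 : ℝ) / 2) * Δ ^ (-(3 : ℝ) / 2) *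
    ε ^ (-(1 : ℝ) / 2) * Real.log (η⁻¹ * ε⁻¹) ^ ((3 : ℝ) / 2)

/-- The bound `L³ J Δ⁻¹ log(η⁻¹ε⁻¹)` appearing in the theorems about stoquastic
frustration-free Hamiltonians. -/
noncomputable def sffBound (L J Δ η ε : ℝ) : ℝ :=
  L ^ (3 : ℕ) * J * Δ⁻¹ * Real.log (η⁻¹ * ε⁻¹)

/-- The marginal of a distribution on `n + m` bits onto the first `n` bits. -/
noncomputable def marginalFst {n m : ℕ} (p : ((Fin n ⊕ Fin m) → Bool) → ℝ)
    (x : Fin n → Bool) : ℝ :=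
  ∑ h : Fin m → Bool, p (Sum.elim x h)

end StoqPaper

/-!
The ground state is `φ = √(Gibbs distribution of B)`. For each node `q`, the term `H_q` is the
parent Hamiltonian of `φ` on the pairs `{y, flip_q y}`: its off-diagonal entries are `-1` and its
diagonal entry is `φ(flip_q y) / φ(y) = exp((E y - E (flip_q y)) / 2)`. Writing `v = φ u`, the
quadratic form of `H_q` is the Dirichlet form `½ ∑_y φ(y) φ(flip_q y) |u y - u (flip_q y)|²`, so
`H_q ≥ 0 = H_q φ`, and a ground state of `∑_q H_q` has `v / φ` constant along every edge of the
hypercube, hence is a multiple of `φ`. The energy change under flipping `q` only involves the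
bias of `q` and the weights at `q`, so `H_q` acts on `q` and its at most `k'` neighbours.
-/

namespace StoqPaper

open Matrix ComplexConjugate

section QuadraticForm

variable {α : Type*} [Fintype α]

lemma qInner_eq_star_dotProduct (v w : α → ℂ) : qInner v w = star v ⬝ᵥ w := rfl

lemma qInner_sum_mulVec {κ : Type*} [Fintype κ] (M : κ → Matrix α α ℂ) (v : α → ℂ) :
    qInner v ((∑ q, M q) *ᵥ v) = ∑ q, qInner v (M q *ᵥ v) := by
  simp only [qInner_eq_star_dotProduct, sum_mulVec, dotProduct_sum]

open scoped ComplexOrder in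
lemma IsEig.nonneg {M : Matrix α α ℂ} (hM : ∀ v, 0 ≤ (qInner v (M *ᵥ v)).re) {μ : ℝ}
    (hμ : IsEig M μ) : 0 ≤ μ := by
  obtain ⟨v, hv0, hv⟩ := hμ
  have hpos : 0 < (star v ⬝ᵥ v).re :=
    (Complex.pos_iff.mp (dotProduct_star_self_pos_iff.mpr hv0)).1
  have h := hM v
  rw [hv, qInner_eq_star_dotProduct, dotProduct_smul, smul_eq_mul, Complex.re_ofReal_mul] at h
  exact nonneg_of_mul_nonneg_left h hpos

lemma isGroundEnergy_zero {M : Matrix α α ℂ} {w : α → ℂ} (hw : w ≠ 0) (hMw : M *ᵥ w = 0)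
    (hM : ∀ v, 0 ≤ (qInner v (M *ᵥ v)).re) : IsGroundEnergy M 0 :=
  ⟨⟨w, hw, by simp [hMw]⟩, fun _ hμ => hμ.nonneg hM⟩

end QuadraticForm

section Flip

variable {ι : Type*} [DecidableEq ι]

def flipAt (q : ι) (y : ι → Bool) : ι → Bool := Function.update y q (!y q)

@[simp]
lemma flipAt_self (q : ι) (y : ι → Bool) : flipAt q y q = !y q := by
  simp [flipAt]

lemma flipAt_of_ne {q i : ι} (h : i ≠ q) (y : ι → Bool) : flipAt q y i = y i :=
  Function.update_of_ne h _ _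

lemma flipAt_involutive (q : ι) : Function.Involutive (flipAt q) := by
  intro y
  funext i
  by_cases h : i = q
  · subst h; simp
  · simp [flipAt_of_ne h]

@[simp]
lemma flipAt_flipAt (q : ι) (y : ι → Bool) : flipAt q (flipAt q y) = y :=
  flipAt_involutive q y

lemma flipAt_ne (q : ι) (y : ι → Bool) : flipAt q y ≠ y := fun h => by
  simpa using congrFun h q

lemma update_eq_self_or_flipAt (q : ι) (b : Bool) (y : ι → Bool) :
    Function.update y q b = y ∨ Function.update y q b = flipAt q y := by
  by_cases hb : b = y q
  · exact Or.inl (by rw [hb, Function.update_eq_self])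
  · exact Or.inr (by rw [flipAt, Bool.eq_not.mpr hb])

lemma eq_iff_eq_of_agree {S : Finset ι} {x y x' y' : ι → Bool} (hx : ∀ i ∈ S, x i = x' i)
    (hy : ∀ i ∈ S, y i = y' i) (hxy : ∀ i ∉ S, x i = y i) (hxy' : ∀ i ∉ S, x' i = y' i) :
    y = x ↔ y' = x' := by
  constructor <;> rintro rfl <;> funext i <;> by_cases hi : i ∈ S
  · rw [← hy i hi, hx i hi]
  · exact (hxy' i hi).symm
  · rw [hy i hi, hx i hi]
  · exact (hxy i hi).symm

variable [Fintype ι]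

lemma sum_comp_flipAt {M : Type*} [AddCommMonoid M] (q : ι) (f : (ι → Bool) → M) :
    ∑ y, f (flipAt q y) = ∑ y, f y :=
  Equiv.sum_comp (flipAt_involutive q).toPerm f

lemma eq_of_forall_flipAt_eq {β : Type*} {u : (ι → Bool) → β}
    (h : ∀ q y, u (flipAt q y) = u y) (y z : ι → Bool) : u z = u y := by
  have hupdate : ∀ q b y, u (Function.update y q b) = u y := fun q b y => by
    rcases update_eq_self_or_flipAt q b y with hy | hy <;> rw [hy]
    exact h q y
  have key : ∀ s : Finset ι, u (fun i => if i ∈ s then z i else y i) = u y := by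
    intro s
    induction s using Finset.induction_on with
    | empty => simp
    | insert a s ha ih =>
      rw [← ih, ← hupdate a (z a) (fun i => if i ∈ s then z i else y i)]
      congr 1
      funext i
      by_cases hi : i = a
      · subst hi; simp [ha]
      · simp [hi]
  simpa using key Finset.univ

end Flip

lemma ofReal_comp_ne_zero {ι : Type*} {ψ : (ι → Bool) → ℝ} (hψ : ∀ y, 0 < ψ y) :
    (fun y => (ψ y : ℂ)) ≠ 0 := fun h =>
  (hψ fun _ => false).ne' (by simpa using congrFun h fun _ => false)

section FlipTerm

variable {ι : Type*} [Fintype ι] [DecidableEq ι]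

noncomputable def flipTerm (ψ : (ι → Bool) → ℝ) (q : ι) : Matrix (ι → Bool) (ι → Bool) ℂ :=
  Matrix.of fun y y' =>
    if y' = y then ((ψ (flipAt q y) / ψ y : ℝ) : ℂ) else if y' = flipAt q y then -1 else 0

variable (ψ : (ι → Bool) → ℝ) (q : ι)

lemma flipTerm_mulVec (v : (ι → Bool) → ℂ) :
    flipTerm ψ q *ᵥ v = fun y => ((ψ (flipAt q y) / ψ y : ℝ) : ℂ) * v y - v (flipAt q y) := by
  funext y
  simp only [mulVec, dotProduct, flipTerm, of_apply, ite_mul, neg_mul, one_mul, zero_mul]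
  rw [Fintype.sum_eq_add y (flipAt q y) (flipAt_ne q y).symm (fun i hi => by simp [hi.1, hi.2])]
  simp [flipAt_ne q y, sub_eq_add_neg]

lemma isHermitian_flipTerm : (flipTerm ψ q).IsHermitian := by
  ext y y'
  simp only [conjTranspose_apply, flipTerm, of_apply]
  by_cases h : y' = y
  · subst h; simp
  · have hflip : y = flipAt q y' ↔ y' = flipAt q y := by
      constructor <;> rintro rfl <;> simp
    simp only [h, Ne.symm h, hflip, if_false]
    split_ifs <;> simp

lemma stoqEntries_flipTerm : StoqEntries (flipTerm ψ q) := by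
  intro y y'
  refine ⟨?_, fun hne => ?_⟩
  · simp only [flipTerm, of_apply]
    split_ifs <;> simp
  · simp only [flipTerm, of_apply, if_neg (Ne.symm hne)]
    split_ifs <;> simp

variable {ψ q} in
lemma localOn_flipTerm {S : Finset ι} (hq : q ∈ S)
    (hψ : ∀ y y', (∀ i ∈ S, y i = y' i) → ψ (flipAt q y) / ψ y = ψ (flipAt q y') / ψ y') :
    LocalOn S (flipTerm ψ q) := by
  have flipAt_of_notMem : ∀ {i} (y : ι → Bool), i ∉ S → flipAt q y i = y i :=
    fun y hi => flipAt_of_ne (by rintro rfl; exact hi hq) y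
  refine ⟨fun x y ⟨i, hiS, hne⟩ => ?_, fun x y x' y' hx hy hxy hxy' => ?_⟩
  · have hx : y ≠ x := fun h => hne (h ▸ rfl)
    have hflip : y ≠ flipAt q x := fun h => hne (by rw [h, flipAt_of_notMem x hiS])
    simp [flipTerm, hx, hflip]
  · have hflip : ∀ i ∈ S, flipAt q x i = flipAt q x' i := fun i hi => by
      by_cases hiq : i = q
      · subst hiq; simp [hx i hi]
      · simp [flipAt_of_ne hiq, hx i hi]
    have hflipy : ∀ i ∉ S, flipAt q x i = y i := fun i hi => by
      rw [flipAt_of_notMem x hi, hxy i hi]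
    have hflipy' : ∀ i ∉ S, flipAt q x' i = y' i := fun i hi => by
      rw [flipAt_of_notMem x' hi, hxy' i hi]
    simp only [flipTerm, of_apply, eq_iff_eq_of_agree hx hy hxy hxy',
      eq_iff_eq_of_agree hflip hy hflipy hflipy', hψ x x' hx]

variable {ψ}

lemma flipTerm_mulVec_self (hψ : ∀ y, ψ y ≠ 0) : flipTerm ψ q *ᵥ (fun y => (ψ y : ℂ)) = 0 := by
  funext y
  simp [flipTerm_mulVec, hψ]

lemma two_mul_re_qInner_flipTerm (hψ : ∀ y, ψ y ≠ 0) (v : (ι → Bool) → ℂ) :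
    2 * (qInner v (flipTerm ψ q *ᵥ v)).re = ∑ y, ψ y * ψ (flipAt q y) *
      Complex.normSq (v y / ψ y - v (flipAt q y) / ψ (flipAt q y)) := by
  set u : (ι → Bool) → ℂ := fun y => v y / ψ y
  have hv : ∀ y, v y = ψ y * u y := fun y => by simp [u, mul_div_cancel₀, hψ]
  have hterm : ∀ y, conj (v y) * (flipTerm ψ q *ᵥ v) y =
      ((ψ y * ψ (flipAt q y) : ℝ) : ℂ) * (conj (u y) * (u y - u (flipAt q y))) := fun y => by
    rw [flipTerm_mulVec]
    dsimp only
    rw [hv y, hv (flipAt q y)]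
    simp only [map_mul, Complex.conj_ofReal, Complex.ofReal_mul, Complex.ofReal_div]
    field_simp [hψ y]
  have hsum : 2 * qInner v (flipTerm ψ q *ᵥ v) = ∑ y, ((ψ y * ψ (flipAt q y) *
      Complex.normSq (u y - u (flipAt q y)) : ℝ) : ℂ) := by
    rw [qInner, Finset.sum_congr rfl fun y _ => hterm y, two_mul]
    nth_rewrite 2 [← sum_comp_flipAt q]
    rw [← Finset.sum_add_distrib]
    refine Finset.sum_congr rfl fun y _ => ?_
    simp only [flipAt_flipAt, Complex.ofReal_mul, Complex.normSq_eq_conj_mul_self, map_sub]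
    ring
  simpa [Complex.re_sum] using congrArg Complex.re hsum

variable (hψ : ∀ y, 0 < ψ y)
include hψ

lemma re_qInner_flipTerm_nonneg (v : (ι → Bool) → ℂ) :
    0 ≤ (qInner v (flipTerm ψ q *ᵥ v)).re := by
  have h := two_mul_re_qInner_flipTerm q (fun y => (hψ y).ne') v
  have : 0 ≤ ∑ y, ψ y * ψ (flipAt q y) *
      Complex.normSq (v y / ψ y - v (flipAt q y) / ψ (flipAt q y)) :=
    Finset.sum_nonneg fun y _ => mul_nonneg (mul_pos (hψ y) (hψ _)).le (Complex.normSq_nonneg _)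
  linarith

lemma div_flipAt_eq_of_re_qInner_flipTerm_eq_zero {v : (ι → Bool) → ℂ}
    (h : (qInner v (flipTerm ψ q *ᵥ v)).re = 0) (y : ι → Bool) :
    v (flipAt q y) / ψ (flipAt q y) = v y / ψ y := by
  have hsum := two_mul_re_qInner_flipTerm q (fun y => (hψ y).ne') v
  rw [h, mul_zero, eq_comm, Finset.sum_eq_zero_iff_of_nonneg fun y _ =>
    mul_nonneg (mul_pos (hψ y) (hψ _)).le (Complex.normSq_nonneg _)] at hsum
  have hy := hsum y (Finset.mem_univ y)
  rw [mul_eq_zero, Complex.normSq_eq_zero, sub_eq_zero] at hy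
  exact (hy.resolve_left (mul_pos (hψ y) (hψ _)).ne').symm

lemma isGroundEnergy_flipTerm : IsGroundEnergy (flipTerm ψ q) 0 :=
  isGroundEnergy_zero (ofReal_comp_ne_zero hψ) (flipTerm_mulVec_self q fun y => (hψ y).ne')
    (re_qInner_flipTerm_nonneg q hψ)

omit q

lemma isGroundEnergy_sum_flipTerm : IsGroundEnergy (∑ q, flipTerm ψ q) 0 := by
  refine isGroundEnergy_zero (ofReal_comp_ne_zero hψ) ?_ fun v => ?_
  · simp [sum_mulVec, flipTerm_mulVec_self _ fun y => (hψ y).ne']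
  · rw [qInner_sum_mulVec, Complex.re_sum]
    exact Finset.sum_nonneg fun q _ => re_qInner_flipTerm_nonneg q hψ v

lemma eq_smul_of_sum_flipTerm_mulVec_eq_zero {v : (ι → Bool) → ℂ}
    (hv : (∑ q, flipTerm ψ q) *ᵥ v = 0) : ∃ c : ℂ, v = c • fun y => (ψ y : ℂ) := by
  have hsum : ∑ q, (qInner v (flipTerm ψ q *ᵥ v)).re = 0 := by
    rw [← Complex.re_sum, ← qInner_sum_mulVec, hv]
    simp [qInner]
  have hzero := (Finset.sum_eq_zero_iff_of_nonneg fun q _ =>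
    re_qInner_flipTerm_nonneg q hψ v).mp hsum
  have hconst := eq_of_forall_flipAt_eq (u := fun y => v y / ψ y)
    fun q => div_flipAt_eq_of_re_qInner_flipTerm_eq_zero q hψ (hzero q (Finset.mem_univ q))
  let y₀ : ι → Bool := fun _ => false
  refine ⟨v y₀ / ψ y₀, funext fun y => ?_⟩
  rw [Pi.smul_apply, smul_eq_mul, ← hconst y₀ y, div_mul_cancel₀ _ (by exact_mod_cast (hψ y).ne')]

end FlipTerm

section Gibbs

variable {ι : Type*} [Fintype ι] [DecidableEq ι] (En : (ι → Bool) → ℝ)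

lemma sum_exp_neg_pos : 0 < ∑ y, Real.exp (-(En y)) :=
  Finset.sum_pos (fun _ _ => Real.exp_pos _) Finset.univ_nonempty

lemma gibbs_pos (y : ι → Bool) : 0 < gibbs En y :=
  div_pos (Real.exp_pos _) (sum_exp_neg_pos En)

lemma sum_gibbs : ∑ y, gibbs En y = 1 := by
  simp only [gibbs]
  exact (Finset.sum_div ..).symm.trans (div_self (sum_exp_neg_pos En).ne')

noncomputable def gibbsAmp (y : ι → Bool) : ℝ := Real.sqrt (gibbs En y)

lemma gibbsAmp_pos (y : ι → Bool) : 0 < gibbsAmp En y := Real.sqrt_pos.mpr (gibbs_pos En y)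

lemma normSq_gibbsAmp (y : ι → Bool) : Complex.normSq (gibbsAmp En y) = gibbs En y := by
  rw [Complex.normSq_ofReal, gibbsAmp, Real.mul_self_sqrt (gibbs_pos En y).le]

lemma l2norm_gibbsAmp : l2norm (fun y => (gibbsAmp En y : ℂ)) = 1 := by
  rw [l2norm]
  simp only [normSq_gibbsAmp, sum_gibbs, Real.sqrt_one]

lemma gibbsAmp_div_gibbsAmp (y y' : ι → Bool) :
    gibbsAmp En y' / gibbsAmp En y = Real.exp ((En y - En y') / 2) := by
  rw [gibbsAmp, gibbsAmp, ← Real.sqrt_div' _ (gibbs_pos En y).le, Real.exp_half]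
  congr 1
  simp only [gibbs]
  rw [div_div_div_cancel_right₀ (sum_exp_neg_pos En).ne', ← Real.exp_sub]
  ring_nf

end Gibbs

namespace BM

variable {n m : ℕ} (B : BM n m)

lemma bv_flipAt (q v : Fin n ⊕ Fin m) (y : Fin n ⊕ Fin m → Bool) :
    bv (flipAt q y v) = bv (y v) + if v = q then bv (!y q) - bv (y q) else 0 := by
  by_cases h : v = q
  · subst h; simp
  · simp [flipAt_of_ne h, h]

lemma energy_flipAt (q : Fin n ⊕ Fin m) (y : Fin n ⊕ Fin m → Bool) :
    B.energy (flipAt q y) =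
      B.energy y - (bv (!y q) - bv (y q)) * (B.a q + ∑ v, B.W q v * bv (y v)) := by
  set d := bv (!y q) - bv (y q)
  have hsymm : ∑ u, B.W u q * bv (y u) = ∑ u, B.W q u * bv (y u) :=
    Finset.sum_congr rfl fun u _ => by rw [B.symm]
  have hfield : ∑ v, B.W q v * d * bv (y v) = d * ∑ v, B.W q v * bv (y v) := by
    rw [Finset.mul_sum]
    exact Finset.sum_congr rfl fun v _ => by ring
  simp only [energy, bv_flipAt, mul_add, add_mul, Finset.sum_add_distrib, mul_ite, ite_mul,
    mul_zero, zero_mul, Finset.sum_ite_irrel, Finset.sum_const_zero, Finset.sum_ite_eq',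
    Finset.mem_univ, if_true, B.diag]
  rw [← Finset.sum_mul, hsymm, hfield]
  ring

open Classical in
noncomputable def nbhd (q : Fin n ⊕ Fin m) : Finset (Fin n ⊕ Fin m) :=
  insert q (Finset.univ.filter fun u => B.W q u ≠ 0)

lemma card_nbhd_le (q : Fin n ⊕ Fin m) : (B.nbhd q).card ≤ B.deg q + 1 :=
  Finset.card_insert_le _ _

lemma energy_sub_energy_flipAt_congr (q : Fin n ⊕ Fin m) {y y' : Fin n ⊕ Fin m → Bool}
    (h : ∀ i ∈ B.nbhd q, y i = y' i) :
    B.energy y - B.energy (flipAt q y) = B.energy y' - B.energy (flipAt q y') := by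
  have hq : y q = y' q := h q (Finset.mem_insert_self _ _)
  have hfield : ∑ v, B.W q v * bv (y v) = ∑ v, B.W q v * bv (y' v) :=
    Finset.sum_congr rfl fun v _ => by
      by_cases hv : B.W q v = 0
      · simp [hv]
      · rw [h v (Finset.mem_insert_of_mem (Finset.mem_filter.mpr ⟨Finset.mem_univ _, hv⟩))]
  rw [energy_flipAt, energy_flipAt, hq, hfield]
  ring

lemma localOn_flipTerm_gibbsAmp (q : Fin n ⊕ Fin m) :
    LocalOn (B.nbhd q) (flipTerm (gibbsAmp B.energy) q) :=
  localOn_flipTerm (Finset.mem_insert_self _ _) fun y y' h => by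
    rw [gibbsAmp_div_gibbsAmp, gibbsAmp_div_gibbsAmp, B.energy_sub_energy_flipAt_congr q h]

lemma dist_eq_marginalFst_gibbs : B.dist = marginalFst (gibbs B.energy) := by
  funext x
  simp only [dist, output, marginalFst, gibbs]
  rw [← Finset.sum_div]
  congr 1
  rw [← (Equiv.sumArrowEquivProdArrow (Fin n) (Fin m) Bool).symm.sum_comp,
    Fintype.sum_prod_type]
  rfl

end BM

end StoqPaper

open StoqPaper
theorem statement_4 (n m k' : ℕ) (B : BM n m) (hdeg : ∀ v, B.deg v ≤ k') :
    ∃ (Hsff : (Fin n ⊕ Fin m) →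
        Matrix ((Fin n ⊕ Fin m) → Bool) ((Fin n ⊕ Fin m) → Bool) ℂ)
      (E : (Fin n ⊕ Fin m) → ℝ) (φ : ((Fin n ⊕ Fin m) → Bool) → ℂ),
      (∀ q, (Hsff q).IsHermitian) ∧
      (∀ q, KLocal (k' + 1) (Hsff q)) ∧
      (∀ q, StoqEntries (Hsff q)) ∧
      (∀ q, IsGroundEnergy (Hsff q) (E q)) ∧
      (∀ q, (Hsff q).mulVec φ = ((E q : ℝ) : ℂ) • φ) ∧
      IsGroundEnergy (∑ q, Hsff q) (∑ q, E q) ∧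
      l2norm φ = 1 ∧
      (∀ v, (∑ q, Hsff q).mulVec v = (((∑ q, E q : ℝ)) : ℂ) • v → ∃ c : ℂ, v = c • φ) ∧
      (∀ x : (Fin n) → Bool,
        B.dist x = ∑ hb : Fin m → Bool, Complex.normSq (φ (Sum.elim x hb))) := by
  set ψ := gibbsAmp B.energy
  have hψ : ∀ y, 0 < ψ y := gibbsAmp_pos B.energy
  refine ⟨flipTerm ψ, fun _ => 0, fun y => (ψ y : ℂ), isHermitian_flipTerm ψ,
    fun q => ⟨B.nbhd q, (B.card_nbhd_le q).trans (Nat.succ_le_succ (hdeg q)),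
      B.localOn_flipTerm_gibbsAmp q⟩,
    stoqEntries_flipTerm ψ, fun q => isGroundEnergy_flipTerm q hψ, fun q => ?_, ?_,
    l2norm_gibbsAmp _, fun v hv => eq_smul_of_sum_flipTerm_mulVec_eq_zero hψ ?_, fun x => ?_⟩
  · simpa using flipTerm_mulVec_self q fun y => (hψ y).ne'
  · simpa using isGroundEnergy_sum_flipTerm hψ
  · simpa using hv
  · simp only [B.dist_eq_marginalFst_gibbs, marginalFst, ψ, normSq_gibbsAmp]
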